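/- arXiv:math/0603632 — 4 statements merged into one kernel-verified Lean document; each statement's English description precedes it below -/
import Mathlib

section
/- Let h : [0,∞) → (0,∞) be continuously differentiable with lim_{t→∞} ḣ(t)/h(t) = 0 and lim_{t→∞} e^t h(t) = ∞. Then lim_{t→∞} (∫₀ᵗ e^{-(t-s)} h(s) ds) / h(t) = 1. -/
open Filter Set Real

/-- Auxiliary: `∫_T^t exp (-(c*(t-s))) ds = (1 - exp (-(c*(t-T))))/c`. -/
lemma int_exp_aux (c T t : ℝ) (hc : c ≠ 0) :
    (∫ s in T..t, Real.exp (-(c * (t - s)))) = (1 - Real.exp (-(c * (t - T)))) / c := by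
  have hfun : ∀ s : ℝ, Real.exp (-(c * (t - s))) = Real.exp (c * s - c * t) := by
    intro s; ring_nf
  have hD : ∀ s ∈ Set.uIcc T t,
      HasDerivAt (fun s => Real.exp (c * s - c * t) / c) (Real.exp (c * s - c * t)) s := by
    intro s _
    have h1 : HasDerivAt (fun s : ℝ => c * s - c * t) c s := by
      simpa using ((hasDerivAt_id s).const_mul c).sub_const (c * t)
    have h2 := (h1.exp).div_const c
    have : Real.exp (c * s - c * t) * c / c = Real.exp (c * s - c * t) := by
      field_simp
    simpa [this] using h2
  have hint : IntervalIntegrable (fun s => Real.exp (c * s - c * t)) MeasureTheory.volume T t :=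
    (Real.continuous_exp.comp ((continuous_const.mul continuous_id).sub continuous_const)).intervalIntegrable _ _
  have := intervalIntegral.integral_eq_sub_of_hasDerivAt hD hint
  simp only [hfun]
  rw [this]
  have e1 : c * t - c * t = 0 := by ring
  have e2 : c * T - c * t = -(c * (t - T)) := by ring
  rw [e1, e2, Real.exp_zero]
  ring

set_option maxHeartbeats 1000000 in
theorem stmt3 (h h' : ℝ → ℝ)
    (hpos : ∀ t ∈ Set.Ici (0:ℝ), 0 < h t)
    (hderiv : ∀ t ∈ Set.Ici (0:ℝ), HasDerivAt h (h' t) t)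
    (hc : ContinuousOn h' (Set.Ici 0))
    (hratio : Tendsto (fun t => h' t / h t) atTop (nhds 0))
    (hinf : Tendsto (fun t => Real.exp t * h t) atTop atTop) :
    Tendsto (fun t : ℝ => (∫ s in (0:ℝ)..t, Real.exp (-(t - s)) * h s) / h t)
      atTop (nhds 1) := by
  have hcont : ContinuousOn h (Set.Ici 0) := fun x hx =>
    (hderiv x hx).continuousAt.continuousWithinAt
  rw [Metric.tendsto_nhds]
  intro ε' hε'
  set ε : ℝ := min (ε' / 8) (1 / 2) with hεdef
  have hε0 : 0 < ε := lt_min (by linarith) (by norm_num)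
  have hε8 : ε ≤ ε' / 8 := min_le_left _ _
  have hεhalf : ε ≤ 1 / 2 := min_le_right _ _
  -- choose T beyond which |h'/h| ≤ ε
  have hev : ∀ᶠ s in atTop, |h' s / h s| < ε := by
    have := Metric.tendsto_nhds.1 hratio ε hε0
    simpa only [Real.dist_eq, sub_zero] using this
  obtain ⟨T₀, hT₀⟩ := eventually_atTop.1 hev
  set T : ℝ := max T₀ 0 with hTdef
  have hT0 : (0:ℝ) ≤ T := le_max_right _ _
  have hbound : ∀ s, T ≤ s → |h' s / h s| ≤ ε := fun s hs =>
    (hT₀ s (le_trans (le_max_left _ _) hs)).le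
  have hIciT : Set.Ici T ⊆ Set.Ici (0:ℝ) := fun x hx => le_trans hT0 hx
  have hposT : ∀ s, T ≤ s → 0 < h s := fun s hs => hpos s (hIciT hs)
  -- derivative of log ∘ h on interior (Ici T)
  have hlogD : ∀ x ∈ interior (Set.Ici T),
      HasDerivAt (fun s => Real.log (h s)) (h' x / h x) x := by
    intro x hx
    rw [interior_Ici] at hx
    exact (hderiv x (hIciT (Set.mem_Ici.2 (le_of_lt hx)))).log (ne_of_gt (hposT x (le_of_lt hx)))
  have hlogC : ContinuousOn (fun s => Real.log (h s)) (Set.Ici T) :=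
    (hcont.mono hIciT).log (fun x hx => ne_of_gt (hposT x hx))
  -- monotone upper: log (h s) + ε s is monotone on Ici T
  have hmonoU : MonotoneOn (fun s => Real.log (h s) + ε * s) (Set.Ici T) := by
    apply monotoneOn_of_hasDerivWithinAt_nonneg (convex_Ici T)
      (hlogC.add (continuous_const.mul continuous_id).continuousOn)
      (f' := fun x => h' x / h x + ε)
    · intro x hx
      exact (((hlogD x hx).add (by simpa using (hasDerivAt_id x).const_mul ε : HasDerivAt (fun s => ε * s) ε x))).hasDerivWithinAt
    · intro x hx
      rw [interior_Ici] at hx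
      have := hbound x (le_of_lt hx)
      have := neg_le_of_abs_le this
      linarith
  -- monotone lower: ε s - log (h s) is monotone on Ici T
  have hmonoL : MonotoneOn (fun s => ε * s - Real.log (h s)) (Set.Ici T) := by
    apply monotoneOn_of_hasDerivWithinAt_nonneg (convex_Ici T)
      (((continuous_const.mul continuous_id).continuousOn).sub hlogC)
      (f' := fun x => ε - h' x / h x)
    · intro x hx
      exact (((by simpa using (hasDerivAt_id x).const_mul ε : HasDerivAt (fun s => ε * s) ε x)).sub
        (hlogD x hx)).hasDerivWithinAt
    · intro x hx
      rw [interior_Ici] at hx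
      have := le_of_abs_le (hbound x (le_of_lt hx))
      linarith
  -- pointwise comparisons on [T, t]
  have hub : ∀ t, T ≤ t → ∀ s ∈ Set.Icc T t, h s ≤ h t * Real.exp (ε * (t - s)) := by
    intro t ht s hs
    have h1 := hmonoU hs.1 (Set.mem_Ici.2 ht) hs.2
    have h2 : Real.log (h s) ≤ Real.log (h t) + ε * (t - s) := by
      simp only at h1; linarith [h1]
    calc h s = Real.exp (Real.log (h s)) := (Real.exp_log (hposT s hs.1)).symm
      _ ≤ Real.exp (Real.log (h t) + ε * (t - s)) := Real.exp_le_exp.2 h2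
      _ = h t * Real.exp (ε * (t - s)) := by
          rw [Real.exp_add, Real.exp_log (hposT t ht)]
  have hlb : ∀ t, T ≤ t → ∀ s ∈ Set.Icc T t, h t * Real.exp (-(ε * (t - s))) ≤ h s := by
    intro t ht s hs
    have h1 := hmonoL hs.1 (Set.mem_Ici.2 ht) hs.2
    have h2 : Real.log (h t) + (-(ε * (t - s))) ≤ Real.log (h s) := by
      simp only at h1; linarith [h1]
    calc h t * Real.exp (-(ε * (t - s)))
        = Real.exp (Real.log (h t) + (-(ε * (t - s)))) := by
          rw [Real.exp_add, Real.exp_log (hposT t ht)]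
      _ ≤ Real.exp (Real.log (h s)) := Real.exp_le_exp.2 h2
      _ = h s := Real.exp_log (hposT s hs.1)
  -- constant C and tail term tendency
  set C : ℝ := ∫ s in (0:ℝ)..T, Real.exp s * h s with hCdef
  have hC0 : 0 ≤ C := by
    apply intervalIntegral.integral_nonneg hT0
    intro u hu
    exact mul_nonneg (Real.exp_pos u).le (hpos u hu.1).le
  have hAtend : Tendsto (fun t => C / (Real.exp t * h t)) atTop (nhds 0) :=
    tendsto_const_nhds.div_atTop hinf
  have hAev : ∀ᶠ t : ℝ in atTop, C / (Real.exp t * h t) < ε := by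
    have := Metric.tendsto_nhds.1 hAtend ε hε0
    filter_upwards [this] with t ht
    rw [Real.dist_eq, sub_zero] at ht
    exact lt_of_le_of_lt (le_abs_self _) ht
  -- δ term
  have htop : Tendsto (fun t : ℝ => (1 + ε) * (t - T)) atTop atTop := by
    apply Tendsto.const_mul_atTop (by linarith : (0:ℝ) < 1 + ε)
    exact tendsto_atTop_add_const_right atTop (-T) tendsto_id
  have hδev : ∀ᶠ t : ℝ in atTop, Real.exp (-((1 + ε) * (t - T))) < ε := by
    have h1 : Tendsto (fun t : ℝ => Real.exp (-((1 + ε) * (t - T)))) atTop (nhds 0) :=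
      Real.tendsto_exp_neg_atTop_nhds_zero.comp htop
    have := Metric.tendsto_nhds.1 h1 ε hε0
    filter_upwards [this] with t ht
    rw [Real.dist_eq, sub_zero] at ht
    exact lt_of_le_of_lt (le_abs_self _) ht
  -- main estimate
  filter_upwards [hAev, hδev, eventually_ge_atTop T] with t hAt hδt htT
  have ht0 : (0:ℝ) ≤ t := le_trans hT0 htT
  have htpos : 0 < h t := hpos t ht0
  -- integrability facts
  have hint1 : IntervalIntegrable (fun s => Real.exp (-(t - s)) * h s) MeasureTheory.volume 0 T := by
    apply ContinuousOn.intervalIntegrable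
    apply ContinuousOn.mul
    · exact (Real.continuous_exp.comp ((continuous_const.sub continuous_id).neg)).continuousOn
    · exact hcont.mono (fun x hx => by
        rw [Set.uIcc_of_le hT0] at hx; exact hx.1)
  have hint2 : IntervalIntegrable (fun s => Real.exp (-(t - s)) * h s) MeasureTheory.volume T t := by
    apply ContinuousOn.intervalIntegrable
    apply ContinuousOn.mul
    · exact (Real.continuous_exp.comp ((continuous_const.sub continuous_id).neg)).continuousOn
    · exact hcont.mono (fun x hx => by
        rw [Set.uIcc_of_le htT] at hx; exact hIciT hx.1)
  -- split the integral
  have hsplit : (∫ s in (0:ℝ)..t, Real.exp (-(t - s)) * h s)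
      = (∫ s in (0:ℝ)..T, Real.exp (-(t - s)) * h s)
        + ∫ s in T..t, Real.exp (-(t - s)) * h s :=
    (intervalIntegral.integral_add_adjacent_intervals hint1 hint2).symm
  -- head term
  have hhead : (∫ s in (0:ℝ)..T, Real.exp (-(t - s)) * h s) = Real.exp (-t) * C := by
    rw [hCdef, ← intervalIntegral.integral_const_mul]
    apply intervalIntegral.integral_congr
    intro s _
    show Real.exp (-(t - s)) * h s = Real.exp (-t) * (Real.exp s * h s)
    rw [show -(t - s) = -t + s by ring, Real.exp_add]
    ring
  have hheadval : (∫ s in (0:ℝ)..T, Real.exp (-(t - s)) * h s) / h t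
      = C / (Real.exp t * h t) := by
    rw [hhead, Real.exp_neg]
    field_simp
  have hheadnn : 0 ≤ C / (Real.exp t * h t) :=
    div_nonneg hC0 (mul_nonneg (Real.exp_pos t).le htpos.le)
  -- bounds for the main term
  have hintU : IntervalIntegrable (fun s => h t * Real.exp (-((1 - ε) * (t - s))))
      MeasureTheory.volume T t :=
    (continuous_const.mul (Real.continuous_exp.comp ((continuous_const.mul (continuous_const.sub continuous_id)).neg))).intervalIntegrable _ _
  have hintL : IntervalIntegrable (fun s => h t * Real.exp (-((1 + ε) * (t - s))))
      MeasureTheory.volume T t :=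
    (continuous_const.mul (Real.continuous_exp.comp ((continuous_const.mul (continuous_const.sub continuous_id)).neg))).intervalIntegrable _ _
  have hIup : (∫ s in T..t, Real.exp (-(t - s)) * h s)
      ≤ h t * ((1 - Real.exp (-((1 - ε) * (t - T)))) / (1 - ε)) := by
    have hmono : (∫ s in T..t, Real.exp (-(t - s)) * h s)
        ≤ ∫ s in T..t, h t * Real.exp (-((1 - ε) * (t - s))) := by
      apply intervalIntegral.integral_mono_on htT hint2 hintU
      intro s hs
      have h1 := hub t htT s hs
      have h2 : Real.exp (-(t - s)) * (h t * Real.exp (ε * (t - s)))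
          = h t * Real.exp (-((1 - ε) * (t - s))) := by
        rw [show -((1 - ε) * (t - s)) = -(t - s) + ε * (t - s) by ring, Real.exp_add]
        ring
      calc Real.exp (-(t - s)) * h s
          ≤ Real.exp (-(t - s)) * (h t * Real.exp (ε * (t - s))) := by
            exact mul_le_mul_of_nonneg_left h1 (Real.exp_pos _).le
        _ = h t * Real.exp (-((1 - ε) * (t - s))) := h2
    rw [intervalIntegral.integral_const_mul, int_exp_aux (1 - ε) T t (by linarith)] at hmono
    exact hmono
  have hIlow : h t * ((1 - Real.exp (-((1 + ε) * (t - T)))) / (1 + ε))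
      ≤ ∫ s in T..t, Real.exp (-(t - s)) * h s := by
    have hmono : (∫ s in T..t, h t * Real.exp (-((1 + ε) * (t - s))))
        ≤ ∫ s in T..t, Real.exp (-(t - s)) * h s := by
      apply intervalIntegral.integral_mono_on htT hintL hint2
      intro s hs
      have h1 := hlb t htT s hs
      have h2 : Real.exp (-(t - s)) * (h t * Real.exp (-(ε * (t - s))))
          = h t * Real.exp (-((1 + ε) * (t - s))) := by
        rw [show -((1 + ε) * (t - s)) = -(t - s) + -(ε * (t - s)) by ring, Real.exp_add]
        ring
      calc h t * Real.exp (-((1 + ε) * (t - s)))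
          = Real.exp (-(t - s)) * (h t * Real.exp (-(ε * (t - s)))) := h2.symm
        _ ≤ Real.exp (-(t - s)) * h s := by
            exact mul_le_mul_of_nonneg_left h1 (Real.exp_pos _).le
    rw [intervalIntegral.integral_const_mul, int_exp_aux (1 + ε) T t (by linarith)] at hmono
    exact hmono
  -- put everything together
  set I : ℝ := ∫ s in T..t, Real.exp (-(t - s)) * h s with hIdef
  set a : ℝ := C / (Real.exp t * h t) with hadef
  have hRval : (∫ s in (0:ℝ)..t, Real.exp (-(t - s)) * h s) / h t = a + I / h t := by
    rw [hsplit, add_div, hheadval]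
  rw [hRval, Real.dist_eq]
  have hδ0 : 0 < Real.exp (-((1 + ε) * (t - T))) := Real.exp_pos _
  have hδ'0 : 0 ≤ Real.exp (-((1 - ε) * (t - T))) := (Real.exp_pos _).le
  -- I / h t bounds
  have hIub : I / h t ≤ 1 / (1 - ε) := by
    rw [div_le_iff₀ htpos]
    calc I ≤ h t * ((1 - Real.exp (-((1 - ε) * (t - T)))) / (1 - ε)) := hIup
      _ ≤ h t * (1 / (1 - ε)) := by
          apply mul_le_mul_of_nonneg_left _ htpos.le
          rw [div_le_div_iff_of_pos_right (by linarith : (0:ℝ) < 1 - ε)]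
          linarith
      _ = 1 / (1 - ε) * h t := by ring
  have hIlb : (1 - ε) / (1 + ε) ≤ I / h t := by
    rw [le_div_iff₀ htpos]
    calc (1 - ε) / (1 + ε) * h t
        = h t * ((1 - ε) / (1 + ε)) := by ring
      _ ≤ h t * ((1 - Real.exp (-((1 + ε) * (t - T)))) / (1 + ε)) := by
          apply mul_le_mul_of_nonneg_left _ htpos.le
          rw [div_le_div_iff_of_pos_right (by linarith : (0:ℝ) < 1 + ε)]
          linarith [hδt.le]
      _ ≤ I := hIlow
  -- numeric finish
  rw [abs_lt]
  constructor
  · -- -(ε') < a + I / h t - 1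
    have : (1 - ε) / (1 + ε) ≤ I / h t := hIlb
    have h1 : 1 - I / h t ≤ 2 * ε / (1 + ε) := by
      have : (1 - ε) / (1 + ε) = 1 - 2 * ε / (1 + ε) := by
        field_simp; ring
      linarith [hIlb, this ▸ hIlb]
    have h2 : 2 * ε / (1 + ε) ≤ 2 * ε := by
      rw [div_le_iff₀ (by linarith : (0:ℝ) < 1 + ε)]
      nlinarith
    nlinarith [hheadnn]
  · -- a + I / h t - 1 < ε'
    have hne : (0:ℝ) < 1 - ε := by linarith
    have h1 : 1 / (1 - ε) - 1 = ε / (1 - ε) := by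
      field_simp
      ring
    have h2 : ε / (1 - ε) ≤ 2 * ε := by
      rw [div_le_iff₀ hne]
      nlinarith
    linarith [hIub, hAt]
end

section
/- Let ρ be a finite positive Borel measure on [0,b] with b > 0, and let a : [0,∞) → (0,∞) be differentiable, decreasing, with lim_{t→∞} ȧ(t)/a(t) = 0. Define g²(t) = ∫₀ᵇ dρ(s)/(s+a(t))². Then |(g²)'(t)| ≤ (2|ȧ(t)|/a(t)) g²(t) for all t, and consequently lim_{t→∞} (g²)'(t)/g²(t) = 0. -/
open Filter Set MeasureTheory Metric

lemma key5 (b : ℝ) (ρ : Measure ℝ) [IsFiniteMeasure ρ]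
    (hae : ∀ᵐ s ∂ρ, s ∈ Set.Icc 0 b) (u : ℝ) (hu : 0 < u) :
    HasDerivAt (fun u => ∫ s, 1 / (s + u) ^ 2 ∂ρ)
      (∫ s, -(2 * (s + u)) / ((s + u) ^ 2) ^ 2 ∂ρ) u ∧
    |∫ s, -(2 * (s + u)) / ((s + u) ^ 2) ^ 2 ∂ρ| ≤ 2 / u * ∫ s, 1 / (s + u) ^ 2 ∂ρ := by
  have hmeas : ∀ x : ℝ, AEStronglyMeasurable (fun s => 1 / (s + x) ^ 2) ρ := by
    intro x
    exact (Measurable.div measurable_const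
      ((measurable_id.add_const x).pow_const 2)).aestronglyMeasurable
  have hmeas' : ∀ x : ℝ, AEStronglyMeasurable
      (fun s => -(2 * (s + x)) / ((s + x) ^ 2) ^ 2) ρ := by
    intro x
    exact (Measurable.div ((measurable_id.add_const x).const_mul 2).neg
      (((measurable_id.add_const x).pow_const 2).pow_const 2)).aestronglyMeasurable
  have hF_int : Integrable (fun s => 1 / (s + u) ^ 2) ρ := by
    refine Integrable.mono' (integrable_const (1 / u ^ 2)) (hmeas u)
      (hae.mono fun s hs => ?_)
    have h1 : 0 < s + u := by linarith [hs.1]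
    rw [Real.norm_eq_abs, abs_of_pos (by positivity)]
    gcongr
    linarith [hs.1]
  have h_bound : ∀ᵐ s ∂ρ, ∀ x ∈ ball u (u / 2),
      ‖-(2 * (s + x)) / ((s + x) ^ 2) ^ 2‖ ≤ 2 / (u / 2) ^ 3 := by
    refine hae.mono fun s hs x hx => ?_
    rw [mem_ball, Real.dist_eq, abs_lt] at hx
    have hsx : u / 2 < s + x := by linarith [hs.1]
    have hsx0 : 0 < s + x := by linarith
    have heq : -(2 * (s + x)) / ((s + x) ^ 2) ^ 2 = -(2 / (s + x) ^ 3) := by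
      field_simp
    rw [heq, Real.norm_eq_abs, abs_neg, abs_of_pos (by positivity)]
    gcongr
  have h_diff : ∀ᵐ s ∂ρ, ∀ x ∈ ball u (u / 2),
      HasDerivAt (fun x => 1 / (s + x) ^ 2) (-(2 * (s + x)) / ((s + x) ^ 2) ^ 2) x := by
    refine hae.mono fun s hs x hx => ?_
    rw [mem_ball, Real.dist_eq, abs_lt] at hx
    have hsx0 : 0 < s + x := by linarith [hs.1]
    have hc : HasDerivAt (fun x : ℝ => (s + x) ^ 2) (2 * (s + x)) x := by
      have := ((hasDerivAt_id x).const_add s).fun_pow 2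
      simpa using this
    have := hc.fun_inv (by positivity)
    simp only [one_div]
    convert this using 1
  have main := hasDerivAt_integral_of_dominated_loc_of_deriv_le (μ := ρ)
    (F := fun x s => 1 / (s + x) ^ 2)
    (F' := fun x s => -(2 * (s + x)) / ((s + x) ^ 2) ^ 2)
    (ball_mem_nhds u (by positivity : (0:ℝ) < u / 2))
    (Filter.Eventually.of_forall fun x => hmeas x) hF_int (hmeas' u)
    h_bound (integrable_const _) h_diff
  refine ⟨main.2, ?_⟩
  have hg_int : Integrable (fun s => 2 / u * (1 / (s + u) ^ 2)) ρ := hF_int.const_mul _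
  have hle : ∀ᵐ s ∂ρ, ‖-(2 * (s + u)) / ((s + u) ^ 2) ^ 2‖ ≤ 2 / u * (1 / (s + u) ^ 2) := by
    refine hae.mono fun s hs => ?_
    have hsu : 0 < s + u := by linarith [hs.1]
    have heq : -(2 * (s + u)) / ((s + u) ^ 2) ^ 2 = -(2 / (s + u) ^ 3) := by
      field_simp
    rw [heq, Real.norm_eq_abs, abs_neg, abs_of_pos (by positivity)]
    have : 2 / (s + u) ^ 3 = 2 / (s + u) * (1 / (s + u) ^ 2) := by
      field_simp
    rw [this]
    gcongr
    linarith [hs.1]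
  calc |∫ s, -(2 * (s + u)) / ((s + u) ^ 2) ^ 2 ∂ρ|
      ≤ ∫ s, 2 / u * (1 / (s + u) ^ 2) ∂ρ := by
        rw [← Real.norm_eq_abs]
        exact norm_integral_le_of_norm_le hg_int hle
    _ = 2 / u * ∫ s, 1 / (s + u) ^ 2 ∂ρ := integral_const_mul _ _

theorem stmt5 (b : ℝ) (hb : 0 < b) (ρ : Measure ℝ) [IsFiniteMeasure ρ]
    (hsupp : ρ (Set.Icc 0 b)ᶜ = 0)
    (a a' : ℝ → ℝ)
    (hapos : ∀ t ∈ Set.Ici (0:ℝ), 0 < a t)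
    (haderiv : ∀ t ∈ Set.Ici (0:ℝ), HasDerivAt a (a' t) t)
    (hdec : AntitoneOn a (Set.Ici 0))
    (hratio : Tendsto (fun t => a' t / a t) atTop (nhds 0))
    (g2 : ℝ → ℝ)
    (hg2 : ∀ t, g2 t = ∫ s, 1 / (s + a t) ^ 2 ∂ρ)
    (hg2pos : ∀ t ∈ Set.Ici (0:ℝ), 0 < g2 t) :
    (∀ t ∈ Set.Ici (0:ℝ), |deriv g2 t| ≤ 2 * |a' t| / a t * g2 t) ∧
      Tendsto (fun t => deriv g2 t / g2 t) atTop (nhds 0) := by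
  have hae : ∀ᵐ s ∂ρ, s ∈ Set.Icc 0 b := by
    rw [MeasureTheory.ae_iff]
    exact hsupp
  -- main bound
  have hbd : ∀ t ∈ Set.Ici (0:ℝ), |deriv g2 t| ≤ 2 * |a' t| / a t * g2 t := by
    intro t ht
    have hat := hapos t ht
    obtain ⟨hder, hDbd⟩ := key5 b ρ hae (a t) hat
    have hcomp : HasDerivAt g2
        ((∫ s, -(2 * (s + a t)) / ((s + a t) ^ 2) ^ 2 ∂ρ) * a' t) t := by
      have := HasDerivAt.comp t hder (haderiv t ht)
      have hfun : g2 = (fun u => ∫ s, 1 / (s + u) ^ 2 ∂ρ) ∘ a := funext fun x => hg2 x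
      rw [hfun]
      exact this
    rw [hcomp.deriv, abs_mul]
    have hg2t : g2 t = ∫ s, 1 / (s + a t) ^ 2 ∂ρ := hg2 t
    calc |∫ s, -(2 * (s + a t)) / ((s + a t) ^ 2) ^ 2 ∂ρ| * |a' t|
        ≤ 2 / a t * (∫ s, 1 / (s + a t) ^ 2 ∂ρ) * |a' t| := by
          gcongr
      _ = 2 * |a' t| / a t * g2 t := by rw [hg2t]; ring
  refine ⟨hbd, ?_⟩
  -- squeeze
  have habs : Tendsto (fun t => 2 * |a' t / a t|) atTop (nhds 0) := by
    have := (hratio.abs).const_mul 2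
    simpa using this
  have hineq : ∀ᶠ t in atTop, |deriv g2 t / g2 t| ≤ 2 * |a' t / a t| := by
    filter_upwards [eventually_ge_atTop (0:ℝ)] with t ht
    have hat := hapos t ht
    have hg2t := hg2pos t ht
    have h1 : |deriv g2 t / g2 t| = |deriv g2 t| / g2 t := by
      rw [abs_div, abs_of_pos hg2t]
    rw [h1]
    have h2 : |deriv g2 t| / g2 t ≤ 2 * |a' t| / a t := by
      rw [div_le_iff₀ hg2t]
      exact hbd t ht
    refine h2.trans_eq ?_
    rw [abs_div, abs_of_pos hat]
    ring
  have h0 : Tendsto (fun t => |deriv g2 t / g2 t|) atTop (nhds 0) :=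
    squeeze_zero' (Filter.Eventually.of_forall fun t => abs_nonneg _) hineq habs
  exact (tendsto_zero_iff_abs_tendsto_zero _).mpr h0
end

section
/- Let Q be a bounded nonnegative selfadjoint operator on H, f, f_δ ∈ H with ‖f_δ - f‖ ≤ δ, f ∈ Range(A) where Q = AA* (so f ⊥ N(Q)), and ‖f_δ‖ > cδ for a constant c ∈ (1,2). Then the equation a‖(Q+aI)^{-1} f_δ‖ = cδ has a unique solution a = a_δ > 0. -/
open Filter Set ContinuousLinearMap

section Setup
variable {H : Type*} [NormedAddCommGroup H] [InnerProductSpace ℂ H] [CompleteSpace H]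
  (A : H →L[ℂ] H)

local notation "Q" => A ∘L ContinuousLinearMap.adjoint A
local notation "⟪" x ", " y "⟫" => @inner ℂ _ _ x y

lemma qq_inner (x : H) : ⟪Q x, x⟫ = (‖ContinuousLinearMap.adjoint A x‖^2 : ℂ) := by
  rw [ContinuousLinearMap.comp_apply]
  rw [show ⟪A (ContinuousLinearMap.adjoint A x), x⟫
      = ⟪ContinuousLinearMap.adjoint A x, ContinuousLinearMap.adjoint A x⟫ from
    (ContinuousLinearMap.adjoint_inner_right A _ _).symm]
  rw [inner_self_eq_norm_sq_to_K]
  norm_num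

noncomputable def TT (a : ℝ) : H →L[ℂ] H := (A ∘L ContinuousLinearMap.adjoint A) + (a:ℂ) • 1

lemma TT_apply (a : ℝ) (x : H) : TT A a x = Q x + (a:ℂ) • x := rfl

lemma TT_inner (a : ℝ) (x : H) :
    ⟪TT A a x, x⟫ = ((‖ContinuousLinearMap.adjoint A x‖^2 + a * ‖x‖^2 : ℝ) : ℂ) := by
  rw [TT_apply, inner_add_left, inner_smul_left, qq_inner, inner_self_eq_norm_sq_to_K]
  push_cast [Complex.conj_ofReal]
  ring_nf
  rfl

lemma TT_sa (a : ℝ) : IsSelfAdjoint (TT A a) := by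
  have h1 : IsSelfAdjoint (A ∘L ContinuousLinearMap.adjoint A) := by
    have := IsSelfAdjoint.mul_star_self A
    rwa [ContinuousLinearMap.star_eq_adjoint] at this
  exact h1.add (IsSelfAdjoint.smul (Complex.conj_ofReal a) (.one _))

lemma TT_lower {a : ℝ} (ha : 0 < a) (x : H) : a * ‖x‖ ≤ ‖TT A a x‖ := by
  rcases eq_or_ne x 0 with rfl | hx
  · simp
  have h1 : a * ‖x‖^2 ≤ RCLike.re ⟪TT A a x, x⟫ := by
    rw [TT_inner]
    simp only [RCLike.re_to_complex, Complex.ofReal_re]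
    nlinarith [sq_nonneg ‖ContinuousLinearMap.adjoint A x‖]
  have h2 : RCLike.re ⟪TT A a x, x⟫ ≤ ‖TT A a x‖ * ‖x‖ := by
    calc RCLike.re ⟪TT A a x, x⟫ ≤ ‖⟪TT A a x, x⟫‖ := RCLike.re_le_norm _
    _ ≤ ‖TT A a x‖ * ‖x‖ := norm_inner_le_norm _ _
  have hx' : 0 < ‖x‖ := norm_pos_iff.mpr hx
  nlinarith

lemma TT_isUnit {a : ℝ} (ha : 0 < a) : IsUnit (TT A a) := by
  have hker : LinearMap.ker (TT A a : H →ₗ[ℂ] H) = ⊥ := by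
    rw [LinearMap.ker_eq_bot']
    intro x hx
    have h := TT_lower A ha x
    rw [show TT A a x = 0 from hx, norm_zero] at h
    have : ‖x‖ ≤ 0 := nonpos_of_mul_nonpos_right h ha |>.trans (le_refl _)
    exact norm_le_zero_iff.mp this
  have hclosed : IsClosed (LinearMap.range (TT A a : H →ₗ[ℂ] H) : Set H) := by
    have hanti : AntilipschitzWith (⟨a, ha.le⟩ : NNReal)⁻¹ (TT A a) := by
      apply AddMonoidHomClass.antilipschitz_of_bound
      intro x
      change ‖x‖ ≤ a⁻¹ * ‖TT A a x‖
      rw [le_inv_mul_iff₀ ha]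
      exact TT_lower A ha x
    exact hanti.isClosed_range (TT A a).uniformContinuous
  have hrange : LinearMap.range (TT A a : H →ₗ[ℂ] H) = ⊤ := by
    have hdense : (LinearMap.range (TT A a : H →ₗ[ℂ] H))ᗮ = ⊥ := by
      rw [Submodule.eq_bot_iff]
      intro v hv
      have h0 : ⟪TT A a v, v⟫ = 0 := hv (TT A a v) (LinearMap.mem_range_self _ v)
      rw [TT_inner] at h0
      have h0' : (‖ContinuousLinearMap.adjoint A v‖^2 + a * ‖v‖^2 : ℝ) = 0 := by
        exact_mod_cast h0
      have hv0 : ‖v‖ ^ 2 = 0 := by nlinarith [sq_nonneg (‖ContinuousLinearMap.adjoint A v‖), sq_nonneg (‖v‖)]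
      have : ‖v‖ = 0 := by
        have := sq_eq_zero_iff.mp hv0
        exact this
      exact norm_eq_zero.mp this
    have h2 := (Submodule.topologicalClosure_eq_top_iff (K := LinearMap.range (TT A a : H →ₗ[ℂ] H))).mpr hdense
    rwa [hclosed.submodule_topologicalClosure_eq] at h2
  let e := ContinuousLinearEquiv.ofBijective (TT A a) hker hrange
  refine ⟨⟨TT A a, (e.symm : H →L[ℂ] H), ?_, ?_⟩, rfl⟩
  · ext x
    exact e.apply_symm_apply x
  · ext x
    exact e.symm_apply_apply x


noncomputable def RR (A : H →L[ℂ] H) (a : ℝ) : H →L[ℂ] H := Ring.inverse (TT A a)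

lemma TR {a : ℝ} (ha : 0 < a) (x : H) : TT A a (RR A a x) = x := by
  have h := Ring.mul_inverse_cancel _ (TT_isUnit A ha)
  calc TT A a (RR A a x) = ((TT A a) * Ring.inverse (TT A a)) x := rfl
  _ = x := by rw [h]; rfl

lemma RT {a : ℝ} (ha : 0 < a) (x : H) : RR A a (TT A a x) = x := by
  have h := Ring.inverse_mul_cancel _ (TT_isUnit A ha)
  calc RR A a (TT A a x) = ((Ring.inverse (TT A a)) * (TT A a)) x := rfl
  _ = x := by rw [h]; rfl

lemma TT_inj {a : ℝ} (ha : 0 < a) : Function.Injective (TT A a) := by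
  intro x y hxy
  have h1 := RT A ha x
  rw [hxy, RT A ha] at h1
  exact h1.symm

lemma TT_comm_apply (a b : ℝ) (x : H) : TT A a (TT A b x) = TT A b (TT A a x) := by
  simp only [TT_apply, map_add, map_smul, smul_add, smul_smul]
  module

lemma RT_comm {a b : ℝ} (ha : 0 < a) (x : H) :
    RR A a (TT A b x) = TT A b (RR A a x) := by
  apply TT_inj A ha
  rw [TR A ha, TT_comm_apply, TR A ha]

lemma RR_bound {a : ℝ} (ha : 0 < a) (x : H) : a * ‖RR A a x‖ ≤ ‖x‖ := by
  have h1 := TT_lower A ha (RR A a x)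
  rwa [TR A ha] at h1


lemma norm_TT_sq (a : ℝ) (h : H) :
    ‖TT A a h‖^2 = ‖Q h‖^2 + 2*a*‖ContinuousLinearMap.adjoint A h‖^2 + a^2*‖h‖^2 := by
  rw [TT_apply, @norm_add_sq ℂ]
  have h1 : RCLike.re ⟪Q h, (a:ℂ) • h⟫ = a * ‖ContinuousLinearMap.adjoint A h‖^2 := by
    rw [inner_smul_right, qq_inner]
    simp only [RCLike.re_to_complex]
    norm_cast
  have h2 : ‖(a:ℂ) • h‖^2 = a^2 * ‖h‖^2 := by
    rw [norm_smul, Complex.norm_real, mul_pow, Real.norm_eq_abs, _root_.sq_abs]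
  rw [h1, h2]
  ring

lemma key_identity (a b : ℝ) (h : H) :
    b^2*‖TT A a h‖^2 - a^2*‖TT A b h‖^2
      = (b^2 - a^2)*‖Q h‖^2 + 2*a*b*(b-a)*‖ContinuousLinearMap.adjoint A h‖^2 := by
  rw [norm_TT_sq, norm_TT_sq]; ring

lemma TT_smul_ker (a t : ℝ) (h : H) (hQ : Q h = 0) :
    TT A a ((t:ℂ) • h) = ((t*a : ℝ):ℂ) • h := by
  rw [TT_apply, map_smul, hQ, smul_zero, zero_add, smul_smul]
  push_cast
  rw [mul_comm]

lemma unique_core (fδ : H) (C : ℝ) (hC : C < ‖fδ‖) {s t : ℝ} (hs : 0 < s) (hst : s < t)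
    (h1 : s * ‖RR A s fδ‖ = C) (h2 : t * ‖RR A t fδ‖ = C) : False := by
  have ht : 0 < t := hs.trans hst
  set h : H := RR A s (RR A t fδ) with hh
  have e1 : RR A t fδ = TT A s h := (TR A hs _).symm
  have e2 : RR A s fδ = TT A t h := by
    rw [hh, ← RT_comm A hs, TR A ht]
  have n1 : s * ‖TT A t h‖ = C := by rw [← e2]; exact h1
  have n2 : t * ‖TT A s h‖ = C := by rw [← e1]; exact h2
  have hkey := key_identity A s t h
  have hz : t^2*‖TT A s h‖^2 - s^2*‖TT A t h‖^2 = 0 := by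
    have e : (t*‖TT A s h‖)^2 = (s*‖TT A t h‖)^2 := by rw [n1, n2]
    nlinarith [e]
  have hQh : ‖Q h‖^2 = 0 := by
    have c1 : 0 < t^2 - s^2 := by nlinarith
    have c2 : 0 ≤ 2*s*t*(t-s) := by nlinarith [mul_pos (mul_pos hs ht) (sub_pos.mpr hst)]
    have hy : 0 ≤ 2*s*t*(t-s) * ‖ContinuousLinearMap.adjoint A h‖^2 := mul_nonneg c2 (sq_nonneg _)
    have hx : (t^2-s^2) * ‖Q h‖^2 ≤ 0 := by linarith
    have hx' : 0 ≤ (t^2-s^2) * ‖Q h‖^2 := mul_nonneg c1.le (sq_nonneg _)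
    rcases mul_eq_zero.mp (le_antisymm hx hx') with h' | h'
    · exact absurd h' (ne_of_gt c1)
    · exact h'
  have hQh' : Q h = 0 := norm_eq_zero.mp (pow_eq_zero_iff (n := 2) (by norm_num) |>.mp hQh)
  have hfeq : fδ = ((s*t : ℝ):ℂ) • h := by
    have : TT A s (RR A s fδ) = fδ := TR A hs fδ
    rw [e2] at this
    rw [← this, TT_apply (a := t), hQh', zero_add, TT_smul_ker A s t h hQh']
    norm_num [mul_comm]
  have hn : ‖fδ‖ = s*t*‖h‖ := by
    rw [hfeq, norm_smul, Complex.norm_real, Real.norm_eq_abs,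
      abs_of_pos (mul_pos hs ht)]
  have hTt : TT A t h = ((t:ℝ):ℂ) • h := by rw [TT_apply, hQh', zero_add]
  have hC' : C = s*(t*‖h‖) := by
    rw [← n1, hTt, norm_smul, Complex.norm_real, Real.norm_eq_abs, abs_of_pos ht]
  have hfC : ‖fδ‖ = C := by rw [hn, hC']; ring
  linarith

lemma phi_contAt (fδ : H) {a : ℝ} (ha : 0 < a) :
    ContinuousAt (fun t : ℝ => t * ‖RR A t fδ‖) a := by
  have hT : Continuous (fun t : ℝ => TT A t) := by
    unfold TT
    exact continuous_const.add ((Complex.continuous_ofReal).smul continuous_const)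
  obtain ⟨u, hu⟩ := TT_isUnit A ha
  have hinv : ContinuousAt (fun t : ℝ => RR A t) a := by
    unfold RR
    apply ContinuousAt.comp (g := Ring.inverse)
    · rw [← hu] at *
      exact NormedRing.inverse_continuousAt u
    · exact hT.continuousAt
  have happ : ContinuousAt (fun t : ℝ => RR A t fδ) a := by
    have hev : Continuous (fun B : H →L[ℂ] H => B fδ) :=
      Continuous.clm_apply continuous_id continuous_const
    exact (hev.continuousAt).comp hinv
  exact continuousAt_id.mul happ.norm

lemma approxQ (y : H) {ε : ℝ} (hε : 0 < ε) : ∃ z : H, ‖A y - Q z‖ < ε := by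
  have hmem : A y ∈ (LinearMap.range (Q : H →ₗ[ℂ] H))ᗮᗮ := by
    intro v hv
    have hQv : ⟪Q v, v⟫ = 0 := hv (Q v) (LinearMap.mem_range_self _ v)
    rw [qq_inner] at hQv
    have hAv : ContinuousLinearMap.adjoint A v = 0 := by
      have : (‖ContinuousLinearMap.adjoint A v‖^2 : ℝ) = 0 := by exact_mod_cast hQv
      exact norm_eq_zero.mp (pow_eq_zero_iff (n := 2) (by norm_num) |>.mp this)
    rw [← ContinuousLinearMap.adjoint_inner_left A, hAv, inner_zero_left]
  rw [Submodule.orthogonal_orthogonal_eq_closure] at hmem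
  have hcl : A y ∈ closure ((LinearMap.range (Q : H →ₗ[ℂ] H) : Submodule ℂ H) : Set H) := by
    rwa [← Submodule.topologicalClosure_coe]
  rw [Metric.mem_closure_iff] at hcl
  obtain ⟨w, hw, hd⟩ := hcl ε hε
  obtain ⟨z, rfl⟩ := hw
  exact ⟨z, by rwa [dist_eq_norm] at hd⟩

lemma RR_Q_apply {a : ℝ} (ha : 0 < a) (z : H) :
    RR A a (Q z) = z - (a:ℂ) • RR A a z := by
  apply TT_inj A ha
  rw [TR A ha, map_sub, map_smul, TR A ha, TT_apply]
  module

lemma phi_large (fδ : H) {a : ℝ} (ha : 0 < a) :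
    ‖fδ‖ - ‖Q fδ‖ / a ≤ a * ‖RR A a fδ‖ := by
  have key : (a:ℂ) • RR A a fδ - fδ = -(RR A a (Q fδ)) := by
    apply TT_inj A ha
    rw [map_sub, map_neg, map_smul, TR A ha, TR A ha, TT_apply]
    module
  have h1 : ‖RR A a (Q fδ)‖ ≤ ‖Q fδ‖ / a := by
    rw [le_div_iff₀ ha, mul_comm]
    exact RR_bound A ha _
  have h2 : ‖fδ‖ - ‖(a:ℂ) • RR A a fδ‖ ≤ ‖RR A a (Q fδ)‖ := by
    calc ‖fδ‖ - ‖(a:ℂ) • RR A a fδ‖ ≤ ‖fδ - (a:ℂ) • RR A a fδ‖ := norm_sub_norm_le _ _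
    _ = ‖RR A a (Q fδ)‖ := by rw [← norm_neg, neg_sub, key, norm_neg]
  have h3 : ‖(a:ℂ) • RR A a fδ‖ = a * ‖RR A a fδ‖ := by
    rw [norm_smul, Complex.norm_real, Real.norm_eq_abs, abs_of_pos ha]
  linarith

end Setup

theorem stmt10 {H : Type*} [NormedAddCommGroup H] [InnerProductSpace ℂ H] [CompleteSpace H]
    (A : H →L[ℂ] H) (y fδ : H) (δ c : ℝ)
    (hδ : 0 < δ) (hc : 1 < c ∧ c < 2)
    (hclose : ‖fδ - A y‖ ≤ δ) (hbig : c * δ < ‖fδ‖) :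
    ∃! a : ℝ, 0 < a ∧
      a * ‖(Ring.inverse ((A ∘L ContinuousLinearMap.adjoint A) + (a : ℂ) • 1)) fδ‖
        = c * δ := by
  obtain ⟨hc1, hc2⟩ := hc
  have hgoal : (fun a : ℝ => 0 < a ∧
      a * ‖(Ring.inverse ((A ∘L ContinuousLinearMap.adjoint A) + (a : ℂ) • 1)) fδ‖ = c * δ)
      = fun a : ℝ => 0 < a ∧ a * ‖RR A a fδ‖ = c * δ := rfl
  rw [hgoal]
  set φ : ℝ → ℝ := fun a => a * ‖RR A a fδ‖ with hφ
  set ε : ℝ := (c - 1) * δ / 2 with hε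
  have hεpos : 0 < ε := by rw [hε]; nlinarith
  obtain ⟨z, hz⟩ := approxQ A y hεpos
  set a₀ : ℝ := min 1 (ε / (2 * ‖z‖ + 1)) with ha₀def
  have ha₀ : 0 < a₀ := by
    apply lt_min one_pos
    positivity
  have hsmall : φ a₀ < c * δ := by
    have hb1 : a₀ * ‖RR A a₀ (fδ - A y)‖ ≤ δ := (RR_bound A ha₀ _).trans (by
      exact hclose.trans (le_refl _)) |>.trans (le_refl _)
    have hb2 : a₀ * ‖RR A a₀ ((A y) - (A ∘L ContinuousLinearMap.adjoint A) z)‖ ≤ ε :=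
      (RR_bound A ha₀ _).trans hz.le
    have hb3 : a₀ * ‖RR A a₀ ((A ∘L ContinuousLinearMap.adjoint A) z)‖ ≤ a₀ * (2 * ‖z‖) := by
      rw [RR_Q_apply A ha₀ z]
      have : ‖z - (a₀:ℂ) • RR A a₀ z‖ ≤ 2 * ‖z‖ := by
        calc ‖z - (a₀:ℂ) • RR A a₀ z‖ ≤ ‖z‖ + ‖(a₀:ℂ) • RR A a₀ z‖ := norm_sub_le _ _
        _ ≤ 2 * ‖z‖ := by
            have h4 : ‖(a₀:ℂ) • RR A a₀ z‖ = a₀ * ‖RR A a₀ z‖ := by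
              rw [norm_smul, Complex.norm_real, Real.norm_eq_abs, abs_of_pos ha₀]
            rw [h4]
            have := RR_bound A ha₀ z
            linarith
      exact mul_le_mul_of_nonneg_left this ha₀.le
    have hsplit : φ a₀ ≤ a₀ * ‖RR A a₀ (fδ - A y)‖
        + a₀ * ‖RR A a₀ ((A y) - (A ∘L ContinuousLinearMap.adjoint A) z)‖
        + a₀ * ‖RR A a₀ ((A ∘L ContinuousLinearMap.adjoint A) z)‖ := by
      have hdecomp : fδ = (fδ - A y) + ((A y) - (A ∘L ContinuousLinearMap.adjoint A) z)
          + ((A ∘L ContinuousLinearMap.adjoint A) z) := by abel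
      calc φ a₀ = a₀ * ‖RR A a₀ ((fδ - A y) + ((A y) - (A ∘L ContinuousLinearMap.adjoint A) z)
          + ((A ∘L ContinuousLinearMap.adjoint A) z))‖ := by rw [hφ]; rw [← hdecomp]
      _ ≤ _ := by
          rw [map_add, map_add]
          have := norm_add₃_le (a := RR A a₀ (fδ - A y))
            (b := RR A a₀ ((A y) - (A ∘L ContinuousLinearMap.adjoint A) z))
            (c := RR A a₀ ((A ∘L ContinuousLinearMap.adjoint A) z))
          nlinarith [this, ha₀]
    have hlast : a₀ * (2 * ‖z‖) < ε := by
      have h5 : a₀ ≤ ε / (2 * ‖z‖ + 1) := min_le_right _ _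
      have h6 : a₀ * (2 * ‖z‖ + 1) ≤ ε := by
        rw [← le_div_iff₀ (by positivity)]
        exact h5
      nlinarith
    have : φ a₀ < δ + ε + ε := by linarith
    rw [hε] at this
    linarith
  set d : ℝ := ‖fδ‖ - c * δ with hd
  have hdpos : 0 < d := by rw [hd]; linarith
  set a₁ : ℝ := max (a₀ + 1) (‖(A ∘L ContinuousLinearMap.adjoint A) fδ‖ / d + 1) with ha₁def
  have ha₀₁ : a₀ < a₁ := lt_of_lt_of_le (lt_add_one a₀) (le_max_left _ _)
  have ha₁ : 0 < a₁ := ha₀.trans ha₀₁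
  have hlarge : c * δ < φ a₁ := by
    have h7 := phi_large A fδ ha₁
    have h8 : ‖(A ∘L ContinuousLinearMap.adjoint A) fδ‖ / a₁ < d := by
      rw [div_lt_iff₀ ha₁]
      have h9 : ‖(A ∘L ContinuousLinearMap.adjoint A) fδ‖ / d + 1 ≤ a₁ := le_max_right _ _
      have h10 : ‖(A ∘L ContinuousLinearMap.adjoint A) fδ‖ / d < a₁ := by linarith
      rw [div_lt_iff₀ hdpos] at h10
      linarith [mul_comm d a₁]
    rw [hd] at h8
    have hφ1 : φ a₁ = a₁ * ‖RR A a₁ fδ‖ := rfl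
    linarith
  have hcont : ContinuousOn φ (Icc a₀ a₁) := fun x hx =>
    (phi_contAt A fδ (lt_of_lt_of_le ha₀ hx.1)).continuousWithinAt
  have hIVT := intermediate_value_Icc ha₀₁.le hcont
  have hmem : c * δ ∈ Icc (φ a₀) (φ a₁) := ⟨hsmall.le, hlarge.le⟩
  obtain ⟨a, haI, hae⟩ := hIVT hmem
  refine ⟨a, ⟨lt_of_lt_of_le ha₀ haI.1, hae⟩, ?_⟩
  rintro b ⟨hbpos, hbe⟩
  have hapos : 0 < a := lt_of_lt_of_le ha₀ haI.1
  rcases lt_trichotomy b a with hlt | heq | hgt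
  · exact absurd (unique_core A fδ (c * δ) hbig hbpos hlt hbe hae) not_false
  · exact heq
  · exact absurd (unique_core A fδ (c * δ) hbig hapos hgt hae hbe) not_false
end

section
/- Let A ∈ B(H), T = A*A, and suppose y ⊥ N(A). Then lim_{a→0⁺} a‖(T+aI)^{-1} y‖ = 0. -/
open Filter Set ContinuousLinearMap

theorem stmt11 {H : Type*} [NormedAddCommGroup H] [InnerProductSpace ℂ H] [CompleteSpace H]
    (A : H →L[ℂ] H) (y : H) (hy : y ∈ (LinearMap.ker (A : H →ₗ[ℂ] H))ᗮ) :
    Tendsto (fun a : ℝ =>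
        a * ‖(Ring.inverse ((ContinuousLinearMap.adjoint A ∘L A) + (a : ℂ) • 1)) y‖)
      (nhdsWithin 0 (Set.Ioi 0)) (nhds 0) := by
  set T : H →L[ℂ] H := ContinuousLinearMap.adjoint A ∘L A with hT
  -- T = star A * A
  have hTmul : T = star A * A := by
    rw [hT, ContinuousLinearMap.star_eq_adjoint]; rfl
  -- spectrum nonneg, invertibility of T + a • 1
  have hsa : IsSelfAdjoint T := by
    rw [hTmul]; exact IsSelfAdjoint.star_mul_self A
  have hunit : ∀ a : ℝ, 0 < a → IsUnit (T + (a : ℂ) • 1) := by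
    intro a ha
    have hns : (-a : ℂ) ∉ spectrum ℂ T := by
      intro hmem
      rw [← hsa.spectrumRestricts.algebraMap_image] at hmem
      obtain ⟨r, hr, hre⟩ := hmem
      have hrnn : 0 ≤ r := by rw [hTmul] at hr; exact spectrum_star_mul_self_nonneg r hr
      have : (r : ℂ) = (-a : ℂ) := hre
      have : r = -a := by exact_mod_cast this
      linarith
    have := spectrum.notMem_iff.mp hns
    have hneg : -(algebraMap ℂ (H →L[ℂ] H) (-a) - T) = T + (a : ℂ) • 1 := by
      rw [Algebra.algebraMap_eq_smul_one]
      module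
    rw [← hneg]
    exact this.neg
  -- coercivity
  have hcoer : ∀ a : ℝ, 0 < a → ∀ x : H, a * ‖x‖ ≤ ‖(T + (a : ℂ) • 1) x‖ := by
    intro a ha x
    have hinner : (inner ℂ ((T + (a : ℂ) • 1) x) x : ℂ)
        = ((‖A x‖ ^ 2 + a * ‖x‖ ^ 2 : ℝ) : ℂ) := by
      simp only [ContinuousLinearMap.add_apply, ContinuousLinearMap.smul_apply,
        ContinuousLinearMap.one_apply, inner_add_left, inner_smul_left, hT,
        ContinuousLinearMap.coe_comp', Function.comp_apply,
        ContinuousLinearMap.adjoint_inner_left, Complex.conj_ofReal,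
        inner_self_eq_norm_sq_to_K]
      norm_cast
      simp [algebraMap.coe_add]
    have h1 : a * ‖x‖ ^ 2 ≤ (inner ℂ ((T + (a : ℂ) • 1) x) x : ℂ).re := by
      rw [hinner, Complex.ofReal_re]
      nlinarith [sq_nonneg ‖A x‖]
    have h2 : (inner ℂ ((T + (a : ℂ) • 1) x) x : ℂ).re ≤ ‖(T + (a : ℂ) • 1) x‖ * ‖x‖ := by
      refine le_trans (Complex.re_le_norm _) ?_
      exact norm_inner_le_norm _ _
    rcases eq_or_lt_of_le (norm_nonneg x) with h0 | h0
    · rw [← h0]; simp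
    · have := le_trans h1 h2
      have := (mul_le_mul_iff_of_pos_right h0).mpr (le_refl (1:ℝ))
      nlinarith
  -- uniform bound : a * ‖inv z‖ ≤ ‖z‖
  have hbound : ∀ a : ℝ, 0 < a → ∀ z : H,
      a * ‖(Ring.inverse (T + (a : ℂ) • 1)) z‖ ≤ ‖z‖ := by
    intro a ha z
    have h1 : (T + (a : ℂ) • 1) ((Ring.inverse (T + (a : ℂ) • 1)) z) = z := by
      have := Ring.mul_inverse_cancel _ (hunit a ha)
      calc (T + (a : ℂ) • 1) ((Ring.inverse (T + (a : ℂ) • 1)) z)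
          = ((T + (a : ℂ) • 1) * Ring.inverse (T + (a : ℂ) • 1)) z := rfl
        _ = (1 : H →L[ℂ] H) z := by rw [this]
        _ = z := rfl
    have := hcoer a ha ((Ring.inverse (T + (a : ℂ) • 1)) z)
    rwa [h1] at this
  -- y is in the closure of the range of T
  have hyc : y ∈ closure ((LinearMap.range (T : H →ₗ[ℂ] H) : Submodule ℂ H) : Set H) := by
    have hsub : (LinearMap.range (T : H →ₗ[ℂ] H) : Submodule ℂ H)ᗮ ≤ LinearMap.ker (A : H →ₗ[ℂ] H) := by
      intro u hu
      have := hu (T u) (LinearMap.mem_range_self _ u)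
      have hAu : (inner ℂ (A u) (A u) : ℂ) = 0 := by
        rw [← ContinuousLinearMap.adjoint_inner_left]
        exact this
      simp only [LinearMap.mem_ker]
      exact inner_self_eq_zero.mp hAu
    have h1 : (LinearMap.ker (A : H →ₗ[ℂ] H) : Submodule ℂ H)ᗮ ≤ ((LinearMap.range (T : H →ₗ[ℂ] H))ᗮ)ᗮ :=
      Submodule.orthogonal_le hsub
    have h2 := (LinearMap.range (T : H →ₗ[ℂ] H) : Submodule ℂ H).orthogonal_orthogonal_eq_closure
    have := h1 hy
    rw [h2] at this
    exact this
  -- main estimate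
  rw [Metric.tendsto_nhdsWithin_nhds]
  intro ε hε
  obtain ⟨z, hz, hdz⟩ : ∃ z ∈ ((LinearMap.range (T : H →ₗ[ℂ] H) : Submodule ℂ H) : Set H),
      ‖y - z‖ < ε / 3 := by
    have := Metric.mem_closure_iff.mp hyc (ε / 3) (by linarith)
    obtain ⟨z, hz1, hz2⟩ := this
    exact ⟨z, hz1, by rwa [dist_eq_norm] at hz2⟩
  obtain ⟨x, hx⟩ := hz
  refine ⟨ε / (3 * (‖x‖ + 1)), by positivity, ?_⟩
  intro a ha hda
  rw [Set.mem_Ioi] at ha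
  rw [Real.dist_eq, sub_zero, abs_of_pos ha] at hda
  rw [Real.dist_eq, sub_zero]
  set B := Ring.inverse (T + (a : ℂ) • 1) with hB
  have hBz : B z = x - (a : ℂ) • B x := by
    have h1 : z = (T + (a : ℂ) • 1) x - (a : ℂ) • x := by
      rw [← hx]; simp [ContinuousLinearMap.add_apply]
    have h2 : B ((T + (a : ℂ) • 1) x) = x := by
      have := Ring.inverse_mul_cancel _ (hunit a ha)
      calc B ((T + (a : ℂ) • 1) x) = (B * (T + (a : ℂ) • 1)) x := rfl
        _ = (1 : H →L[ℂ] H) x := by rw [hB, this]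
        _ = x := rfl
    rw [h1, map_sub, h2, map_smul]
  have key : a * ‖B y‖ < ε := by
    have h1 : a * ‖B y‖ ≤ a * ‖B (y - z)‖ + a * ‖B z‖ := by
      have : B y = B (y - z) + B z := by rw [← map_add, sub_add_cancel]
      rw [this]
      have := norm_add_le (B (y - z)) (B z)
      nlinarith [norm_nonneg (B (y-z)), norm_nonneg (B z)]
    have h2 : a * ‖B (y - z)‖ ≤ ‖y - z‖ := hbound a ha (y - z)
    have h3 : a * ‖B z‖ ≤ a * ‖x‖ + a * ‖x‖ := by
      rw [hBz]
      have hn : ‖x - (a : ℂ) • B x‖ ≤ ‖x‖ + a * ‖B x‖ := by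
        calc ‖x - (a : ℂ) • B x‖ ≤ ‖x‖ + ‖(a : ℂ) • B x‖ := norm_sub_le _ _
          _ = ‖x‖ + a * ‖B x‖ := by
              rw [norm_smul, Complex.norm_real, Real.norm_eq_abs, abs_of_pos ha]
      have hb := hbound a ha x
      nlinarith
    have h4 : a * ‖x‖ < ε / 3 := by
      have hx1 : ‖x‖ < ‖x‖ + 1 := by linarith
      calc a * ‖x‖ ≤ a * (‖x‖ + 1) := by nlinarith [norm_nonneg x]
        _ < (ε / (3 * (‖x‖ + 1))) * (‖x‖ + 1) := by
            apply mul_lt_mul_of_pos_right hda (by positivity)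
        _ = ε / 3 := by field_simp
    linarith
  have : |a * ‖B y‖| = a * ‖B y‖ := abs_of_nonneg (by positivity)
  rw [this]
  exact key
end
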